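/- Let B and C be bounded operators on H which belong to the class C(A) (i.e. B, C ∈ C^1(A) and the approximation classes A_2(A,B) and A_2(A,C) are non-empty). Then for any λ ∈ ℂ, the operators BC, B + λC and B* also belong to C(A). -/

import Mathlib

open Set MeasureTheory

variable {H : Type} [NormedAddCommGroup H] [InnerProductSpace ℂ H] [CompleteSpace H]

/-- `C` is the bounded operator representing the commutator form
`F(φ,ψ) = ⟨Aφ, Bψ⟩ − ⟨φ, BAψ⟩` on `D(A) × D(A)`; its existence means `B ∈ C¹(A)`
and then `C = ad_A(B) = [A,B]`. -/
def IsCommutatorOf (A : H →ₗ.[ℂ] H) (B C : H →L[ℂ] H) : Prop :=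
  ∀ x y : A.domain,
    (inner ℂ (A x) (B (y : H)) : ℂ) - inner ℂ (x : H) (B (A y)) = inner ℂ (x : H) (C (y : H))

/-- The family `(B_ε)_{ε∈(0,ε₀]}` belongs to the class `A₀(B)`: `‖B_ε − B‖ ≤ cε`,
`ε ↦ B_ε` is norm-`C¹` on `(0,ε₀]`, and `ε ↦ ε⁻¹‖∂_ε B_ε‖` is integrable. -/
def MemA0 (B : H →L[ℂ] H) (ε₀ : ℝ) (Bf : ℝ → H →L[ℂ] H) : Prop :=
  0 < ε₀ ∧
  (∃ c : ℝ, 0 < c ∧ ∀ ε ∈ Ioc (0:ℝ) ε₀, ‖Bf ε - B‖ ≤ c * ε) ∧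
  ∃ Bd : ℝ → H →L[ℂ] H,
    (∀ ε ∈ Ioc (0:ℝ) ε₀, HasDerivWithinAt Bf (Bd ε) (Ioc (0:ℝ) ε₀) ε) ∧
    ContinuousOn Bd (Ioc (0:ℝ) ε₀) ∧
    IntegrableOn (fun ε => ε⁻¹ * ‖Bd ε‖) (Ioc (0:ℝ) ε₀)

/-- The family `(B_ε)` together with the commutator family `adBf ε = [A, B_ε]`
satisfies the conditions of the class `A₁(A,B)` (where `adB = [A,B]`): it is in
`A₀(B)`, each `B_ε ∈ C¹(A)`, `‖[A,B_ε] − [A,B]‖ → 0` as `ε → 0`, `ε ↦ [A,B_ε]` is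
norm-`C¹` on `(0,ε₀]`, and `ε ↦ ‖∂_ε[A,B_ε]‖` is integrable. -/
def MemA1With (A : H →ₗ.[ℂ] H) (B adB : H →L[ℂ] H) (ε₀ : ℝ)
    (Bf adBf : ℝ → H →L[ℂ] H) : Prop :=
  MemA0 B ε₀ Bf ∧
  (∀ ε ∈ Ioc (0:ℝ) ε₀, IsCommutatorOf A (Bf ε) (adBf ε)) ∧
  Filter.Tendsto (fun ε => ‖adBf ε - adB‖) (nhdsWithin 0 (Ioc (0:ℝ) ε₀)) (nhds 0) ∧
  ∃ Cd : ℝ → H →L[ℂ] H,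
    (∀ ε ∈ Ioc (0:ℝ) ε₀, HasDerivWithinAt adBf (Cd ε) (Ioc (0:ℝ) ε₀) ε) ∧
    ContinuousOn Cd (Ioc (0:ℝ) ε₀) ∧
    IntegrableOn (fun ε => ‖Cd ε‖) (Ioc (0:ℝ) ε₀)

/-- The family `(B_ε)_{ε∈(0,ε₀]}` belongs to the class `A₁(A,B)`. -/
def MemA1 (A : H →ₗ.[ℂ] H) (B adB : H →L[ℂ] H) (ε₀ : ℝ)
    (Bf : ℝ → H →L[ℂ] H) : Prop :=
  ∃ adBf, MemA1With A B adB ε₀ Bf adBf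

/-- The family `(B_ε)_{ε∈(0,ε₀]}` belongs to the class `A₂(A,B)`: it is in `A₁(A,B)`
and moreover each `B_ε ∈ C²(A)` with `ε ↦ ‖ad_A² B_ε‖` integrable. -/
def MemA2 (A : H →ₗ.[ℂ] H) (B adB : H →L[ℂ] H) (ε₀ : ℝ)
    (Bf : ℝ → H →L[ℂ] H) : Prop :=
  ∃ adBf ad2Bf : ℝ → H →L[ℂ] H,
    MemA1With A B adB ε₀ Bf adBf ∧
    (∀ ε ∈ Ioc (0:ℝ) ε₀, IsCommutatorOf A (adBf ε) (ad2Bf ε)) ∧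
    IntegrableOn (fun ε => ‖ad2Bf ε‖) (Ioc (0:ℝ) ε₀)

/-- `B` belongs to the class `C(A)`: `B ∈ C¹(A)` and `A₂(A,B) ≠ ∅`. -/
def MemCclass (A : H →ₗ.[ℂ] H) (B : H →L[ℂ] H) : Prop :=
  ∃ adB : H →L[ℂ] H, IsCommutatorOf A B adB ∧
    ∃ (ε₀ : ℝ) (Bf : ℝ → H →L[ℂ] H), MemA2 A B adB ε₀ Bf

/-!
Commutators with `A` are linear, satisfy `[A, B*] = -[A, B]*`, and satisfy the Leibniz rule
`[A, BC] = [A, B] C + B [A, C]`; the last one uses that an operator of class `C¹(A)` maps `D(A)`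
into itself, which is where self-adjointness of `A` enters. Hence `B_ε C_ε`, `B_ε + λ C_ε` and
`B_ε*` are approximating families of class `A₂`: every defining condition follows from the sum and
product rules, the boundedness of `B_ε` and `[A, B_ε]` on `(0, ε₀]`, and domination of the
integrands. The one subtle point is measurability of `ε ↦ ‖ad_A² (B_ε C_ε)‖`, of which only the
pointwise values are known: it is lower semicontinuous, being a supremum of the continuous functions
`ε ↦ |⟨x, ad_A² (B_ε C_ε) y⟩|` over `x, y` in the dense subspace `D(A)`.
-/

open Filter Topology

section General

variable {𝕜 E F : Type*} [RCLike 𝕜] [NormedAddCommGroup E] [InnerProductSpace 𝕜 E]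
  [NormedAddCommGroup F] [InnerProductSpace 𝕜 F]

local notation "⟪" x ", " y "⟫" => (inner 𝕜 x y : 𝕜)

theorem ContinuousLinearMap.exists_lt_norm_inner_apply_of_dense {D : Set E} {D' : Set F}
    (hD : Dense D) (hD' : Dense D') (T : E →L[𝕜] F) {c : ℝ} (hc : c < ‖T‖) :
    ∃ x ∈ D', ∃ y ∈ D, ‖x‖ < 1 ∧ ‖y‖ < 1 ∧ c < ‖⟪x, T y⟫‖ := by
  obtain ⟨y₀, hy₀, hTy₀⟩ := T.exists_lt_apply_of_lt_opNorm hc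
  obtain ⟨x₀, hx₀, hx₀T⟩ :=
    (innerSL 𝕜 (T y₀)).exists_lt_apply_of_lt_opNorm (by rwa [innerSL_apply_norm])
  rw [innerSL_apply_apply, norm_inner_symm] at hx₀T
  have hU : IsOpen ({p : F × E | ‖p.1‖ < 1} ∩ {p | ‖p.2‖ < 1} ∩ {p | c < ‖⟪p.1, T p.2⟫‖}) :=
    ((isOpen_lt continuous_fst.norm continuous_const).inter
      (isOpen_lt continuous_snd.norm continuous_const)).inter
      (isOpen_lt continuous_const (continuous_fst.inner (T.continuous.comp continuous_snd)).norm)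
  obtain ⟨⟨x, y⟩, ⟨⟨hx1, hy1⟩, hxy⟩, hx, hy⟩ :=
    (hD'.prod hD).inter_open_nonempty _ hU ⟨(x₀, y₀), ⟨hx₀, hy₀⟩, hx₀T⟩
  exact ⟨x, hx, y, hy, hx1, hy1, hxy⟩

theorem lowerSemicontinuous_norm_of_continuous_inner {X : Type*} [TopologicalSpace X]
    {D : Set E} {D' : Set F} (hD : Dense D) (hD' : Dense D') {G : X → E →L[𝕜] F}
    (hG : ∀ x ∈ D', ∀ y ∈ D, Continuous fun t => ⟪x, G t y⟫) :
    LowerSemicontinuous fun t => ‖G t‖ := by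
  intro t c hc
  obtain ⟨x, hx, y, hy, hx1, hy1, hxy⟩ := (G t).exists_lt_norm_inner_apply_of_dense hD hD' hc
  filter_upwards [(hG x hx y hy).norm.continuousAt.eventually (eventually_gt_nhds hxy)]
    with s hs
  calc c < ‖⟪x, G s y⟫‖ := hs
    _ ≤ ‖x‖ * ‖G s y‖ := norm_inner_le_norm _ _
    _ ≤ ‖G s y‖ := mul_le_of_le_one_left (norm_nonneg _) hx1.le
    _ ≤ ‖G s‖ := (G s).unit_le_opNorm y hy1.le

end General

section Families

variable {E : Type*} [SeminormedAddCommGroup E]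

theorem tendsto_nhdsWithin_zero_of_norm_sub_le_mul {f : ℝ → E} {L : E} {s : Set ℝ} {c : ℝ}
    (h : ∀ ε ∈ s, ‖f ε - L‖ ≤ c * ε) : Tendsto f (𝓝[s] 0) (𝓝 L) := by
  rw [tendsto_iff_norm_sub_tendsto_zero]
  refine squeeze_zero' (Eventually.of_forall fun _ => norm_nonneg _)
    (eventually_nhdsWithin_of_forall h) ?_
  exact ((continuous_const_mul c).tendsto' 0 0 (mul_zero c)).mono_left nhdsWithin_le_nhds

theorem exists_bound_of_continuousOn_Ioc_of_tendsto {a b : ℝ} {f : ℝ → E} {L : E}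
    (hf : ContinuousOn f (Ioc a b)) (hL : Tendsto f (𝓝[Ioc a b] a) (𝓝 L)) :
    ∃ M, 0 ≤ M ∧ ∀ x ∈ Ioc a b, ‖f x‖ ≤ M := by
  classical
  have hcont : ContinuousOn (Function.update f a L) (Icc a b) := by
    intro x hx
    rcases hx.1.eq_or_lt with rfl | hax
    · rwa [continuousWithinAt_update_same, Icc_sdiff_left]
    · rw [continuousWithinAt_update_of_ne hax.ne', ← Ioc_insert_left (hx.1.trans hx.2),
        continuousWithinAt_insert]
      exact hf x ⟨hax, hx.2⟩
  obtain ⟨M, hM⟩ := isCompact_Icc.exists_bound_of_continuousOn hcont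
  refine ⟨max M 0, le_max_right _ _, fun x hx => le_max_of_le_left ?_⟩
  simpa [Function.update_of_ne hx.1.ne'] using hM x (Ioc_subset_Icc_self hx)

theorem integrableOn_Ioc_of_integrableOn_inv_mul {b : ℝ} {g : ℝ → ℝ}
    (hg : IntegrableOn (fun ε => ε⁻¹ * g ε) (Ioc 0 b)) : IntegrableOn g (Ioc 0 b) := by
  have hbdd : IntegrableOn (fun ε => ε * (ε⁻¹ * g ε)) (Ioc 0 b) :=
    hg.bdd_mul (c := |b|) continuous_id.aestronglyMeasurable
      ((ae_restrict_iff' measurableSet_Ioc).2 (Eventually.of_forall fun ε hε => by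
        rw [Real.norm_eq_abs, abs_of_pos hε.1]; exact hε.2.trans (le_abs_self b)))
  exact hbdd.congr_fun (fun ε hε => mul_inv_cancel_left₀ hε.1.ne' (g ε)) measurableSet_Ioc

theorem integrableOn_of_forall_norm_le {f g : ℝ → ℝ} {s : Set ℝ} (hs : MeasurableSet s)
    (hg : IntegrableOn g s) (hf : AEStronglyMeasurable f (volume.restrict s))
    (h : ∀ ε ∈ s, ‖f ε‖ ≤ g ε) : IntegrableOn f s :=
  hg.mono' hf (ae_restrict_of_forall_mem hs h)

theorem integrableOn_inv_mul_norm_of_le {b : ℝ} {X : ℝ → E} {g : ℝ → ℝ}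
    (hX : ContinuousOn X (Ioc 0 b)) (hg : IntegrableOn (fun ε => ε⁻¹ * g ε) (Ioc 0 b))
    (h : ∀ ε ∈ Ioc (0:ℝ) b, ‖X ε‖ ≤ g ε) :
    IntegrableOn (fun ε => ε⁻¹ * ‖X ε‖) (Ioc 0 b) := by
  have hinv : ContinuousOn (fun ε : ℝ => ε⁻¹) (Ioc 0 b) :=
    continuousOn_inv₀.mono fun _ hε => hε.1.ne'
  refine integrableOn_of_forall_norm_le measurableSet_Ioc hg
    ((hinv.mul hX.norm).aestronglyMeasurable measurableSet_Ioc) fun ε hε => ?_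
  have hε' : 0 ≤ ε⁻¹ := inv_nonneg.2 hε.1.le
  rw [Real.norm_of_nonneg (mul_nonneg hε' (norm_nonneg _))]
  exact mul_le_mul_of_nonneg_left (h ε hε) hε'

theorem norm_mul_add_mul_le {R : Type*} [SeminormedRing R] {x y z w : R} {a b : ℝ}
    (hy : ‖y‖ ≤ a) (hz : ‖z‖ ≤ b) : ‖x * y + z * w‖ ≤ a * ‖x‖ + b * ‖w‖ :=
  calc ‖x * y + z * w‖ ≤ ‖x‖ * ‖y‖ + ‖z‖ * ‖w‖ :=
        (norm_add_le _ _).trans (add_le_add (norm_mul_le _ _) (norm_mul_le _ _))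
    _ ≤ a * ‖x‖ + b * ‖w‖ := by
        rw [mul_comm a]
        exact add_le_add (mul_le_mul_of_nonneg_left hy (norm_nonneg x))
          (mul_le_mul_of_nonneg_right hz (norm_nonneg w))

end Families

section ClassC

variable {E : Type} [NormedAddCommGroup E] [InnerProductSpace ℂ E]

namespace IsCommutatorOf

local notation "⟪" x ", " y "⟫" => (inner ℂ x y : ℂ)

variable {A : E →ₗ.[ℂ] E} {B C adB adC : E →L[ℂ] E}

theorem add (hB : IsCommutatorOf A B adB) (hC : IsCommutatorOf A C adC) :
    IsCommutatorOf A (B + C) (adB + adC) := by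
  intro x y
  simp only [add_apply, inner_add_right]
  linear_combination hB x y + hC x y

theorem smul (l : ℂ) (hC : IsCommutatorOf A C adC) : IsCommutatorOf A (l • C) (l • adC) := by
  intro x y
  simp only [smul_apply, inner_smul_right]
  linear_combination l * hC x y

theorem adjoint [CompleteSpace E] (hB : IsCommutatorOf A B adB) :
    IsCommutatorOf A (star B) (-star adB) := by
  intro x y
  have h := congrArg (starRingEnd ℂ) (hB y x)
  simp only [map_sub, inner_conj_symm] at h
  simp only [ContinuousLinearMap.star_eq_adjoint, neg_apply,
    inner_neg_right, ContinuousLinearMap.adjoint_inner_right]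
  linear_combination -h

theorem neg_adjoint [CompleteSpace E] (hB : IsCommutatorOf A B adB) :
    IsCommutatorOf A (-star B) (star adB) := by
  simpa using hB.adjoint.smul (-1)

theorem exists_mem_domain [CompleteSpace E] (hA : IsSelfAdjoint A) (hB : IsCommutatorOf A B adB)
    (y : A.domain) :
    ∃ hy : B y ∈ A.domain, A ⟨B y, hy⟩ = B (A y) + adB y := by
  have hform : ∀ x : A.domain, ⟪B (A y) + adB y, (x : E)⟫ = ⟪B y, A x⟫ := by
    intro x
    have h := congrArg (starRingEnd ℂ) (hB x y)
    simp only [map_sub, inner_conj_symm] at h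
    rw [inner_add_left]
    linear_combination -h
  -- `hform` shows that `B y ∈ D(A†) = D(A)`
  have hy : B y ∈ A.domain := by
    have h := LinearPMap.mem_adjoint_domain_of_exists _ ⟨_, hform⟩
    rwa [LinearPMap.isSelfAdjoint_def.mp hA] at h
  refine ⟨hy, hA.dense_domain.eq_of_inner_left ℂ fun x hx => ?_⟩
  have hsymm : A.IsFormalAdjoint A := by
    simpa only [LinearPMap.isSelfAdjoint_def.mp hA] using
      LinearPMap.adjoint_isFormalAdjoint hA.dense_domain (T := A)
  rw [hform ⟨x, hx⟩]
  exact hsymm ⟨B y, hy⟩ ⟨x, hx⟩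

theorem mul [CompleteSpace E] (hA : IsSelfAdjoint A) (hB : IsCommutatorOf A B adB)
    (hC : IsCommutatorOf A C adC) :
    IsCommutatorOf A (B * C) (adB * C + B * adC) := by
  intro x y
  obtain ⟨hy, hAy⟩ := hC.exists_mem_domain hA y
  have h := hB x ⟨C y, hy⟩
  simp only [hAy] at h
  simp only [mul_apply_eq_comp, add_apply, inner_add_right, map_add] at h ⊢
  linear_combination h

end IsCommutatorOf

theorem aestronglyMeasurable_norm_of_isCommutatorOf {A : E →ₗ.[ℂ] E}
    (hD : Dense (A.domain : Set E)) {s : Set ℝ} (hs : MeasurableSet s) {P G : ℝ → E →L[ℂ] E}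
    (hP : ContinuousOn P s) (hG : ∀ ε ∈ s, IsCommutatorOf A (P ε) (G ε)) :
    AEStronglyMeasurable (fun ε => ‖G ε‖) (volume.restrict s) := by
  have hlsc : LowerSemicontinuous fun t : s => ‖G t‖ := by
    refine lowerSemicontinuous_norm_of_continuous_inner hD hD fun x hx y hy => ?_
    have hPs : Continuous (s.domRestrict P) := hP.domRestrict
    have hform : (fun t : s => inner ℂ x (G t y)) = fun t : s =>
        inner ℂ (A ⟨x, hx⟩) (P t y) - inner ℂ x (P t (A ⟨y, hy⟩)) :=
      funext fun t => (hG t t.2 ⟨x, hx⟩ ⟨y, hy⟩).symm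
    rw [hform]
    exact (continuous_const.inner (hPs.clm_apply continuous_const)).sub
      (continuous_const.inner (hPs.clm_apply continuous_const))
  exact (aemeasurable_restrict_of_measurable_subtype hs hlsc.measurable).aestronglyMeasurable

/-- The data of a family of class `A₂(A,B)` on `(0,ε₀]`: `fam ε = B_ε`, `ad ε = [A,B_ε]`,
`ad2 ε = ad_A² B_ε`, and `deriv`, `derivAd` are the `ε`-derivatives of `fam` and `ad`. -/
structure A2Approx (A : E →ₗ.[ℂ] E) (B adB : E →L[ℂ] E) (ε₀ : ℝ) where
  fam : ℝ → E →L[ℂ] E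
  ad : ℝ → E →L[ℂ] E
  ad2 : ℝ → E →L[ℂ] E
  deriv : ℝ → E →L[ℂ] E
  derivAd : ℝ → E →L[ℂ] E
  pos : 0 < ε₀
  norm_sub_le : ∃ c, ∀ ε ∈ Ioc (0:ℝ) ε₀, ‖fam ε - B‖ ≤ c * ε
  hasDerivWithinAt : ∀ ε ∈ Ioc (0:ℝ) ε₀, HasDerivWithinAt fam (deriv ε) (Ioc 0 ε₀) ε
  continuousOn_deriv : ContinuousOn deriv (Ioc 0 ε₀)
  integrableOn_deriv : IntegrableOn (fun ε => ε⁻¹ * ‖deriv ε‖) (Ioc 0 ε₀)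
  isCommutatorOf : ∀ ε ∈ Ioc (0:ℝ) ε₀, IsCommutatorOf A (fam ε) (ad ε)
  tendsto_ad : Tendsto ad (𝓝[Ioc 0 ε₀] 0) (𝓝 adB)
  hasDerivWithinAt_ad : ∀ ε ∈ Ioc (0:ℝ) ε₀, HasDerivWithinAt ad (derivAd ε) (Ioc 0 ε₀) ε
  continuousOn_derivAd : ContinuousOn derivAd (Ioc 0 ε₀)
  integrableOn_derivAd : IntegrableOn (fun ε => ‖derivAd ε‖) (Ioc 0 ε₀)
  isCommutatorOf_ad : ∀ ε ∈ Ioc (0:ℝ) ε₀, IsCommutatorOf A (ad ε) (ad2 ε)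
  integrableOn_ad2 : IntegrableOn (fun ε => ‖ad2 ε‖) (Ioc 0 ε₀)

theorem memCclass_iff {A : E →ₗ.[ℂ] E} {B : E →L[ℂ] E} :
    MemCclass A B ↔ ∃ adB, IsCommutatorOf A B adB ∧ ∃ ε₀, Nonempty (A2Approx A B adB ε₀) := by
  constructor
  · rintro ⟨adB, hadB, ε₀, Bf, adBf, ad2Bf, ⟨⟨hpos, ⟨c, -, hc⟩, d, hd, hdc, hdi⟩, hcomm,
      htend, dad, hdad, hdadc, hdadi⟩, hcomm2, hi2⟩
    exact ⟨adB, hadB, ε₀, ⟨⟨Bf, adBf, ad2Bf, d, dad, hpos, ⟨c, hc⟩, hd, hdc, hdi, hcomm,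
      tendsto_iff_norm_sub_tendsto_zero.2 htend, hdad, hdadc, hdadi, hcomm2, hi2⟩⟩⟩
  · rintro ⟨adB, hadB, ε₀, ⟨P⟩⟩
    obtain ⟨c, hc⟩ := P.norm_sub_le
    have hc' : ∀ ε ∈ Ioc (0:ℝ) ε₀, ‖P.fam ε - B‖ ≤ (|c| + 1) * ε := fun ε hε =>
      (hc ε hε).trans (mul_le_mul_of_nonneg_right (by linarith [le_abs_self c]) hε.1.le)
    exact ⟨adB, hadB, ε₀, P.fam, P.ad, P.ad2,
      ⟨⟨P.pos, ⟨|c| + 1, by positivity, hc'⟩, P.deriv, P.hasDerivWithinAt, P.continuousOn_deriv,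
        P.integrableOn_deriv⟩, P.isCommutatorOf, tendsto_iff_norm_sub_tendsto_zero.1 P.tendsto_ad,
        P.derivAd, P.hasDerivWithinAt_ad, P.continuousOn_derivAd, P.integrableOn_derivAd⟩,
      P.isCommutatorOf_ad, P.integrableOn_ad2⟩

namespace A2Approx

variable {A : E →ₗ.[ℂ] E} {B C adB adC : E →L[ℂ] E} {ε₀ : ℝ}
  (P : A2Approx A B adB ε₀) (Q : A2Approx A C adC ε₀)

theorem continuousOn_fam : ContinuousOn P.fam (Ioc 0 ε₀) :=
  fun ε hε => (P.hasDerivWithinAt ε hε).continuousWithinAt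

theorem continuousOn_ad : ContinuousOn P.ad (Ioc 0 ε₀) :=
  fun ε hε => (P.hasDerivWithinAt_ad ε hε).continuousWithinAt

theorem tendsto_fam : Tendsto P.fam (𝓝[Ioc 0 ε₀] 0) (𝓝 B) :=
  let ⟨_, hc⟩ := P.norm_sub_le
  tendsto_nhdsWithin_zero_of_norm_sub_le_mul hc

theorem exists_bound_fam : ∃ M, 0 ≤ M ∧ ∀ ε ∈ Ioc (0:ℝ) ε₀, ‖P.fam ε‖ ≤ M :=
  exists_bound_of_continuousOn_Ioc_of_tendsto P.continuousOn_fam P.tendsto_fam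

theorem exists_bound_ad : ∃ M, 0 ≤ M ∧ ∀ ε ∈ Ioc (0:ℝ) ε₀, ‖P.ad ε‖ ≤ M :=
  exists_bound_of_continuousOn_Ioc_of_tendsto P.continuousOn_ad P.tendsto_ad

theorem integrableOn_norm_deriv : IntegrableOn (fun ε => ‖P.deriv ε‖) (Ioc 0 ε₀) :=
  integrableOn_Ioc_of_integrableOn_inv_mul P.integrableOn_deriv

def restrict {ε₁ : ℝ} (h₀ : 0 < ε₁) (h₁ : ε₁ ≤ ε₀) : A2Approx A B adB ε₁ :=
  have hsub : Ioc (0:ℝ) ε₁ ⊆ Ioc 0 ε₀ := Ioc_subset_Ioc_right h₁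
  { P with
    pos := h₀
    norm_sub_le := P.norm_sub_le.imp fun _ hc ε hε => hc ε (hsub hε)
    hasDerivWithinAt := fun ε hε => (P.hasDerivWithinAt ε (hsub hε)).mono hsub
    continuousOn_deriv := P.continuousOn_deriv.mono hsub
    integrableOn_deriv := P.integrableOn_deriv.mono_set hsub
    isCommutatorOf := fun ε hε => P.isCommutatorOf ε (hsub hε)
    tendsto_ad := P.tendsto_ad.mono_left (nhdsWithin_mono 0 hsub)
    hasDerivWithinAt_ad := fun ε hε => (P.hasDerivWithinAt_ad ε (hsub hε)).mono hsub
    continuousOn_derivAd := P.continuousOn_derivAd.mono hsub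
    integrableOn_derivAd := P.integrableOn_derivAd.mono_set hsub
    isCommutatorOf_ad := fun ε hε => P.isCommutatorOf_ad ε (hsub hε)
    integrableOn_ad2 := P.integrableOn_ad2.mono_set hsub }

def smul (l : ℂ) : A2Approx A (l • C) (l • adC) ε₀ where
  fam ε := l • Q.fam ε
  ad ε := l • Q.ad ε
  ad2 ε := l • Q.ad2 ε
  deriv ε := l • Q.deriv ε
  derivAd ε := l • Q.derivAd ε
  pos := Q.pos
  norm_sub_le := by
    obtain ⟨c, hc⟩ := Q.norm_sub_le
    refine ⟨‖l‖ * c, fun ε hε => ?_⟩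
    rw [← smul_sub, norm_smul, mul_assoc]
    exact mul_le_mul_of_nonneg_left (hc ε hε) (norm_nonneg l)
  hasDerivWithinAt ε hε := (Q.hasDerivWithinAt ε hε).const_smul l
  continuousOn_deriv := Q.continuousOn_deriv.const_smul l
  integrableOn_deriv := by
    simpa only [IntegrableOn, norm_smul, mul_left_comm] using Q.integrableOn_deriv.const_mul ‖l‖
  isCommutatorOf ε hε := (Q.isCommutatorOf ε hε).smul l
  tendsto_ad := Q.tendsto_ad.const_smul l
  hasDerivWithinAt_ad ε hε := (Q.hasDerivWithinAt_ad ε hε).const_smul l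
  continuousOn_derivAd := Q.continuousOn_derivAd.const_smul l
  integrableOn_derivAd := by
    simpa only [IntegrableOn, norm_smul] using Q.integrableOn_derivAd.const_mul ‖l‖
  isCommutatorOf_ad ε hε := (Q.isCommutatorOf_ad ε hε).smul l
  integrableOn_ad2 := by
    simpa only [IntegrableOn, norm_smul] using Q.integrableOn_ad2.const_mul ‖l‖

noncomputable def adjoint [CompleteSpace E] : A2Approx A (star B) (-star adB) ε₀ where
  fam ε := star (P.fam ε)
  ad ε := -star (P.ad ε)
  ad2 ε := star (P.ad2 ε)
  deriv ε := star (P.deriv ε)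
  derivAd ε := -star (P.derivAd ε)
  pos := P.pos
  norm_sub_le := P.norm_sub_le.imp fun _ hc ε hε => by
    simpa only [← star_sub, norm_star] using hc ε hε
  hasDerivWithinAt ε hε := (P.hasDerivWithinAt ε hε).star
  continuousOn_deriv := P.continuousOn_deriv.star
  integrableOn_deriv := by simpa only [norm_star] using P.integrableOn_deriv
  isCommutatorOf ε hε := (P.isCommutatorOf ε hε).adjoint
  tendsto_ad := P.tendsto_ad.star.neg
  hasDerivWithinAt_ad ε hε := (P.hasDerivWithinAt_ad ε hε).star.neg
  continuousOn_derivAd := P.continuousOn_derivAd.star.neg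
  integrableOn_derivAd := by simpa only [norm_neg, norm_star] using P.integrableOn_derivAd
  isCommutatorOf_ad ε hε := (P.isCommutatorOf_ad ε hε).neg_adjoint
  integrableOn_ad2 := by simpa only [norm_star] using P.integrableOn_ad2

def add (hD : Dense (A.domain : Set E)) : A2Approx A (B + C) (adB + adC) ε₀ where
  fam ε := P.fam ε + Q.fam ε
  ad ε := P.ad ε + Q.ad ε
  ad2 ε := P.ad2 ε + Q.ad2 ε
  deriv ε := P.deriv ε + Q.deriv ε
  derivAd ε := P.derivAd ε + Q.derivAd ε
  pos := P.pos
  norm_sub_le := by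
    obtain ⟨cP, hcP⟩ := P.norm_sub_le
    obtain ⟨cQ, hcQ⟩ := Q.norm_sub_le
    refine ⟨cP + cQ, fun ε hε => ?_⟩
    rw [add_sub_add_comm, add_mul]
    exact (norm_add_le _ _).trans (add_le_add (hcP ε hε) (hcQ ε hε))
  hasDerivWithinAt ε hε := (P.hasDerivWithinAt ε hε).add (Q.hasDerivWithinAt ε hε)
  continuousOn_deriv := P.continuousOn_deriv.add Q.continuousOn_deriv
  integrableOn_deriv :=
    integrableOn_inv_mul_norm_of_le (P.continuousOn_deriv.add Q.continuousOn_deriv)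
      (by simp only [mul_add]; exact P.integrableOn_deriv.add Q.integrableOn_deriv)
      fun _ _ => norm_add_le _ _
  isCommutatorOf ε hε := (P.isCommutatorOf ε hε).add (Q.isCommutatorOf ε hε)
  tendsto_ad := P.tendsto_ad.add Q.tendsto_ad
  hasDerivWithinAt_ad ε hε := (P.hasDerivWithinAt_ad ε hε).add (Q.hasDerivWithinAt_ad ε hε)
  continuousOn_derivAd := P.continuousOn_derivAd.add Q.continuousOn_derivAd
  integrableOn_derivAd :=
    integrableOn_of_forall_norm_le measurableSet_Ioc
      (P.integrableOn_derivAd.add Q.integrableOn_derivAd)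
      ((P.continuousOn_derivAd.add Q.continuousOn_derivAd).norm.aestronglyMeasurable
        measurableSet_Ioc) fun _ _ => (norm_norm _).trans_le (norm_add_le _ _)
  isCommutatorOf_ad ε hε := (P.isCommutatorOf_ad ε hε).add (Q.isCommutatorOf_ad ε hε)
  integrableOn_ad2 :=
    integrableOn_of_forall_norm_le measurableSet_Ioc (P.integrableOn_ad2.add Q.integrableOn_ad2)
      (aestronglyMeasurable_norm_of_isCommutatorOf hD measurableSet_Ioc
        (P.continuousOn_ad.add Q.continuousOn_ad)
        fun ε hε => (P.isCommutatorOf_ad ε hε).add (Q.isCommutatorOf_ad ε hε))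
      fun _ _ => (norm_norm _).trans_le (norm_add_le _ _)

theorem norm_sub_le_mul : ∃ c, ∀ ε ∈ Ioc (0:ℝ) ε₀, ‖P.fam ε * Q.fam ε - B * C‖ ≤ c * ε := by
  obtain ⟨cP, hcP⟩ := P.norm_sub_le
  obtain ⟨cQ, hcQ⟩ := Q.norm_sub_le
  obtain ⟨MQ, hMQ0, hMQ⟩ := Q.exists_bound_fam
  refine ⟨MQ * cP + ‖B‖ * cQ, fun ε hε => ?_⟩
  calc ‖P.fam ε * Q.fam ε - B * C‖ = ‖(P.fam ε - B) * Q.fam ε + B * (Q.fam ε - C)‖ := by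
        congr 1; noncomm_ring
    _ ≤ MQ * ‖P.fam ε - B‖ + ‖B‖ * ‖Q.fam ε - C‖ := norm_mul_add_mul_le (hMQ ε hε) le_rfl
    _ ≤ MQ * (cP * ε) + ‖B‖ * (cQ * ε) :=
        add_le_add (mul_le_mul_of_nonneg_left (hcP ε hε) hMQ0)
          (mul_le_mul_of_nonneg_left (hcQ ε hε) (norm_nonneg B))
    _ = (MQ * cP + ‖B‖ * cQ) * ε := by ring

theorem integrableOn_deriv_mul :
    IntegrableOn (fun ε => ε⁻¹ * ‖P.deriv ε * Q.fam ε + P.fam ε * Q.deriv ε‖) (Ioc 0 ε₀) := by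
  obtain ⟨MP, -, hMP⟩ := P.exists_bound_fam
  obtain ⟨MQ, -, hMQ⟩ := Q.exists_bound_fam
  refine integrableOn_inv_mul_norm_of_le ((P.continuousOn_deriv.mul Q.continuousOn_fam).add
    (P.continuousOn_fam.mul Q.continuousOn_deriv)) ?_
    fun ε hε => norm_mul_add_mul_le (hMQ ε hε) (hMP ε hε)
  simp only [mul_add, mul_left_comm _ MQ, mul_left_comm _ MP]
  exact (P.integrableOn_deriv.const_mul MQ).add (Q.integrableOn_deriv.const_mul MP)

theorem integrableOn_derivAd_mul :
    IntegrableOn (fun ε => ‖(P.derivAd ε * Q.fam ε + P.ad ε * Q.deriv ε) +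
      (P.deriv ε * Q.ad ε + P.fam ε * Q.derivAd ε)‖) (Ioc 0 ε₀) := by
  obtain ⟨MP, -, hMP⟩ := P.exists_bound_fam
  obtain ⟨MQ, -, hMQ⟩ := Q.exists_bound_fam
  obtain ⟨aP, -, haP⟩ := P.exists_bound_ad
  obtain ⟨aQ, -, haQ⟩ := Q.exists_bound_ad
  refine integrableOn_of_forall_norm_le measurableSet_Ioc
    (((P.integrableOn_derivAd.const_mul MQ).add (Q.integrableOn_norm_deriv.const_mul aP)).add
      ((P.integrableOn_norm_deriv.const_mul aQ).add (Q.integrableOn_derivAd.const_mul MP)))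
    ((((P.continuousOn_derivAd.mul Q.continuousOn_fam).add
      (P.continuousOn_ad.mul Q.continuousOn_deriv)).add
      ((P.continuousOn_deriv.mul Q.continuousOn_ad).add
        (P.continuousOn_fam.mul Q.continuousOn_derivAd))).norm.aestronglyMeasurable
      measurableSet_Ioc) fun ε hε => ?_
  rw [norm_norm]
  exact (norm_add_le _ _).trans (add_le_add (norm_mul_add_mul_le (hMQ ε hε) (haP ε hε))
    (norm_mul_add_mul_le (haQ ε hε) (hMP ε hε)))

theorem integrableOn_ad2_mul [CompleteSpace E] (hA : IsSelfAdjoint A) :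
    IntegrableOn (fun ε => ‖(P.ad2 ε * Q.fam ε + P.ad ε * Q.ad ε) +
      (P.ad ε * Q.ad ε + P.fam ε * Q.ad2 ε)‖) (Ioc 0 ε₀) := by
  obtain ⟨MP, -, hMP⟩ := P.exists_bound_fam
  obtain ⟨MQ, -, hMQ⟩ := Q.exists_bound_fam
  obtain ⟨aP, haP0, haP⟩ := P.exists_bound_ad
  obtain ⟨aQ, haQ0, haQ⟩ := Q.exists_bound_ad
  have hconst : IntegrableOn (fun _ => aP * aQ) (Ioc (0:ℝ) ε₀) :=
    integrableOn_const measure_Ioc_lt_top.ne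
  refine integrableOn_of_forall_norm_le measurableSet_Ioc
    (((P.integrableOn_ad2.const_mul MQ).add hconst).add
      (hconst.add (Q.integrableOn_ad2.const_mul MP)))
    (aestronglyMeasurable_norm_of_isCommutatorOf hA.dense_domain measurableSet_Ioc
      ((P.continuousOn_ad.mul Q.continuousOn_fam).add (P.continuousOn_fam.mul Q.continuousOn_ad))
      fun ε hε => ((P.isCommutatorOf_ad ε hε).mul hA (Q.isCommutatorOf ε hε)).add
        ((P.isCommutatorOf ε hε).mul hA (Q.isCommutatorOf_ad ε hε))) fun ε hε => ?_
  have hPQ : aP * ‖Q.ad ε‖ ≤ aP * aQ := mul_le_mul_of_nonneg_left (haQ ε hε) haP0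
  have hQP : aQ * ‖P.ad ε‖ ≤ aP * aQ := by
    rw [mul_comm aP]; exact mul_le_mul_of_nonneg_left (haP ε hε) haQ0
  simp only [Pi.add_apply, norm_norm]
  refine (norm_add_le _ _).trans (add_le_add ?_ ?_)
  · linarith [norm_mul_add_mul_le (x := P.ad2 ε) (w := Q.ad ε) (hMQ ε hε) (haP ε hε)]
  · linarith [norm_mul_add_mul_le (x := P.ad ε) (w := Q.ad2 ε) (haQ ε hε) (hMP ε hε)]

def mul [CompleteSpace E] (hA : IsSelfAdjoint A) :
    A2Approx A (B * C) (adB * C + B * adC) ε₀ where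
  fam ε := P.fam ε * Q.fam ε
  ad ε := P.ad ε * Q.fam ε + P.fam ε * Q.ad ε
  ad2 ε := (P.ad2 ε * Q.fam ε + P.ad ε * Q.ad ε) + (P.ad ε * Q.ad ε + P.fam ε * Q.ad2 ε)
  deriv ε := P.deriv ε * Q.fam ε + P.fam ε * Q.deriv ε
  derivAd ε :=
    (P.derivAd ε * Q.fam ε + P.ad ε * Q.deriv ε) + (P.deriv ε * Q.ad ε + P.fam ε * Q.derivAd ε)
  pos := P.pos
  norm_sub_le := P.norm_sub_le_mul Q
  hasDerivWithinAt ε hε := (P.hasDerivWithinAt ε hε).mul (Q.hasDerivWithinAt ε hε)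
  continuousOn_deriv :=
    (P.continuousOn_deriv.mul Q.continuousOn_fam).add (P.continuousOn_fam.mul Q.continuousOn_deriv)
  integrableOn_deriv := P.integrableOn_deriv_mul Q
  isCommutatorOf ε hε := (P.isCommutatorOf ε hε).mul hA (Q.isCommutatorOf ε hε)
  tendsto_ad := (P.tendsto_ad.mul Q.tendsto_fam).add (P.tendsto_fam.mul Q.tendsto_ad)
  hasDerivWithinAt_ad ε hε := ((P.hasDerivWithinAt_ad ε hε).mul (Q.hasDerivWithinAt ε hε)).add
    ((P.hasDerivWithinAt ε hε).mul (Q.hasDerivWithinAt_ad ε hε))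
  continuousOn_derivAd :=
    ((P.continuousOn_derivAd.mul Q.continuousOn_fam).add
      (P.continuousOn_ad.mul Q.continuousOn_deriv)).add
    ((P.continuousOn_deriv.mul Q.continuousOn_ad).add
      (P.continuousOn_fam.mul Q.continuousOn_derivAd))
  integrableOn_derivAd := P.integrableOn_derivAd_mul Q
  isCommutatorOf_ad ε hε := ((P.isCommutatorOf_ad ε hε).mul hA (Q.isCommutatorOf ε hε)).add
    ((P.isCommutatorOf ε hε).mul hA (Q.isCommutatorOf_ad ε hε))
  integrableOn_ad2 := P.integrableOn_ad2_mul Q hA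

end A2Approx

namespace MemCclass

variable {A : E →ₗ.[ℂ] E} {B C : E →L[ℂ] E}

theorem smul (l : ℂ) (hC : MemCclass A C) : MemCclass A (l • C) := by
  obtain ⟨adC, hadC, ε₀, ⟨Q⟩⟩ := memCclass_iff.1 hC
  exact memCclass_iff.2 ⟨_, hadC.smul l, ε₀, ⟨Q.smul l⟩⟩

theorem adjoint [CompleteSpace E] (hB : MemCclass A B) : MemCclass A (star B) := by
  obtain ⟨adB, hadB, ε₀, ⟨P⟩⟩ := memCclass_iff.1 hB
  exact memCclass_iff.2 ⟨_, hadB.adjoint, ε₀, ⟨P.adjoint⟩⟩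

theorem add (hD : Dense (A.domain : Set E)) (hB : MemCclass A B) (hC : MemCclass A C) :
    MemCclass A (B + C) := by
  obtain ⟨adB, hadB, ε₁, ⟨P⟩⟩ := memCclass_iff.1 hB
  obtain ⟨adC, hadC, ε₂, ⟨Q⟩⟩ := memCclass_iff.1 hC
  have hε : 0 < min ε₁ ε₂ := lt_min P.pos Q.pos
  exact memCclass_iff.2 ⟨_, hadB.add hadC, _,
    ⟨(P.restrict hε (min_le_left _ _)).add (Q.restrict hε (min_le_right _ _)) hD⟩⟩

theorem mul [CompleteSpace E] (hA : IsSelfAdjoint A) (hB : MemCclass A B) (hC : MemCclass A C) :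
    MemCclass A (B * C) := by
  obtain ⟨adB, hadB, ε₁, ⟨P⟩⟩ := memCclass_iff.1 hB
  obtain ⟨adC, hadC, ε₂, ⟨Q⟩⟩ := memCclass_iff.1 hC
  have hε : 0 < min ε₁ ε₂ := lt_min P.pos Q.pos
  exact memCclass_iff.2 ⟨_, hadB.mul hA hadC, _,
    ⟨(P.restrict hε (min_le_left _ _)).mul (Q.restrict hε (min_le_right _ _)) hA⟩⟩

end MemCclass

end ClassC

/-- If `B` and `C` belong to the class `C(A)`, then so do `BC`, `B + λC` and `B*`. -/
theorem stmt_16 (A : H →ₗ.[ℂ] H) (hA : IsSelfAdjoint A)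
    (B C : H →L[ℂ] H) (hB : MemCclass A B) (hC : MemCclass A C) (l : ℂ) :
    MemCclass A (B * C) ∧ MemCclass A (B + l • C) ∧ MemCclass A (star B) :=
  ⟨hB.mul hA hC, hB.add hA.dense_domain (hC.smul l), hB.adjoint⟩
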